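/- arXiv:2410.07651 — 2 statements merged into one kernel-verified Lean document; each statement's English description precedes it below -/
import Mathlib

section
/- Let α > 0, r₂ > 0, β ∈ (0,1), γ > 0, ν ≥ 0, and ν₁, c₁, r₁ ∈ ℝ. Set d̄ = 1/√β, b̄ = ν₁·d̄, ā = 2√(γν), ā₁ = 2√(γν) − b̄, ā₂ = −2√(γν) − b̄, f₂₁ = 2·[ −(1/(4γ))·( ā·e^{−ā²/2}/√(2π) + (1/2)·erfc(ā/√2) ) + (ν/2)·erfc(ā/√2) ], f₂₂₁ = −(1/(4γ))·( (ā₁ + 2b̄)·e^{−ā₁²/2}/√(2π) + ((b̄² + 1)/2)·erfc(ā₁/√2) ) + (ν/2)·erfc(ā₁/√2), and f₂₂₂ = −(1/(4γ))·( −(ā₂ + 2b̄)·e^{−ā₂²/2}/√(2π) + ((b̄² + 1)/2)·erfc(−ā₂/√2) ) + (ν/2)·erfc(−ā₂/√2). Then inf_{γ_sq>0}( γ_sq·r₂ + α·r₂/(4γ_sq) ) − ν₁c₁ − γr₁² − νβ + (1−β)·∫_ℝ min( ν − h²/(4γ), 0 ) dγ₁(h) + β·∫_ℝ min( ν − (h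 + b̄)²/(4γ), 0 ) dγ₁(h) = − ν₁c₁ − γr₁² − νβ + (1−β)·f₂₁ + β·(f₂₂₁ + f₂₂₂) + √α·r₂. -/
/-!
Where `ν - y²/c` is negative, i.e. for `|y| > A` with `A² = cν`, the truncated integrand is a
quadratic polynomial times the standard normal density `φ`, and
`-(c₁ + c₂ x) φ x + (c₀ + c₂) erf (x/√2) / 2` is an antiderivative of `(c₀ + c₁ x + c₂ x²) φ x`
whose limit at `+∞` is `(c₀ + c₂)/2`. This evaluates the right tail; the left tail is reflected
onto a right one using `φ (-x) = φ x`. The infimum over `γ_sq` is attained at `γ_sq = √α / 2`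
(AM–GM).
-/

open MeasureTheory ProbabilityTheory Real

/-- The error function `erf x = (2/√π) ∫₀ˣ e^{-t²} dt`. -/
noncomputable def erf (x : ℝ) : ℝ := (2 / Real.sqrt π) * ∫ t in (0:ℝ)..x, Real.exp (-t ^ 2)

/-- The complementary error function `erfc x = 1 - erf x`. -/
noncomputable def erfc (x : ℝ) : ℝ := 1 - erf x

open Filter Set Topology

lemma hasDerivAt_erf (x : ℝ) : HasDerivAt erf (2 / √π * exp (-x ^ 2)) x := by
  have hc : Continuous fun t : ℝ => exp (-t ^ 2) := by fun_prop
  exact (intervalIntegral.integral_hasDerivAt_right (hc.intervalIntegrable _ _)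
    hc.stronglyMeasurable.stronglyMeasurableAtFilter hc.continuousAt).const_mul _

lemma tendsto_erf_atTop : Tendsto erf atTop (𝓝 1) := by
  have hI : Tendsto (fun x => ∫ t in (0:ℝ)..x, exp (-t ^ 2)) atTop (𝓝 (√π / 2)) := by
    have h := integral_gaussian_Ioi 1
    simp only [neg_mul, one_mul, div_one] at h
    exact h ▸ intervalIntegral_tendsto_integral_Ioi 0
      (by simpa using (integrable_exp_neg_mul_sq one_pos).integrableOn) tendsto_id
  have h2 : 2 / √π * (√π / 2) = 1 := by field_simp
  exact h2 ▸ hI.const_mul (2 / √π)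

lemma gaussianPDFReal_zero_one (x : ℝ) :
    gaussianPDFReal 0 1 x = exp (-x ^ 2 / 2) / √(2 * π) := by
  simp [gaussianPDFReal, div_eq_inv_mul]

lemma gaussianPDFReal_zero_one_neg (x : ℝ) :
    gaussianPDFReal 0 1 (-x) = gaussianPDFReal 0 1 x := by
  simp [gaussianPDFReal_zero_one]

lemma hasDerivAt_gaussianPDFReal_zero_one (x : ℝ) :
    HasDerivAt (gaussianPDFReal 0 1) (-x * gaussianPDFReal 0 1 x) x := by
  have h : HasDerivAt (fun y => exp (-y ^ 2 / 2) / √(2 * π))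
      (exp (-x ^ 2 / 2) * (-(2 * x ^ 1) / 2) / √(2 * π)) x :=
    (((hasDerivAt_pow 2 x).neg.div_const 2).exp).div_const _
  rw [funext gaussianPDFReal_zero_one]
  exact h.congr_deriv (by ring)

lemma hasDerivAt_erf_div_sqrt_two (x : ℝ) :
    HasDerivAt (fun y => erf (y / √2) / 2) (gaussianPDFReal 0 1 x) x := by
  have h := ((hasDerivAt_erf (x / √2)).comp x ((hasDerivAt_id x).div_const √2)).div_const 2
  refine h.congr_deriv ?_
  rw [gaussianPDFReal_zero_one, div_pow, sq_sqrt zero_le_two, sqrt_mul zero_le_two]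
  field_simp

lemma integrable_pow_mul_gaussianPDFReal (n : ℕ) :
    Integrable fun x => x ^ n * gaussianPDFReal 0 1 x := by
  have h := (integrable_rpow_mul_exp_neg_mul_sq (b := 1 / 2) (by norm_num)
    (s := n) (by linarith [n.cast_nonneg (α := ℝ)])).div_const √(2 * π)
  refine h.congr (ae_of_all _ fun x => ?_)
  simp only [gaussianPDFReal_zero_one, rpow_natCast]
  ring_nf

lemma tendsto_pow_mul_gaussianPDFReal_atTop (n : ℕ) :
    Tendsto (fun x => x ^ n * gaussianPDFReal 0 1 x) atTop (𝓝 0) := by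
  have he : Tendsto (fun x : ℝ => exp (-(1 / 2) * x)) atTop (𝓝 0) := by
    simpa only [neg_mul, Function.comp_def, id] using
      tendsto_exp_neg_atTop_nhds_zero.comp (tendsto_id.const_mul_atTop (one_half_pos (α := ℝ)))
  have h := ((rpow_mul_exp_neg_mul_sq_isLittleO_exp_neg (b := 1 / 2) (by norm_num) n).trans_tendsto
    he).div_const √(2 * π)
  rw [zero_div] at h
  refine h.congr fun x => ?_
  simp only [gaussianPDFReal_zero_one, rpow_natCast]
  ring_nf

lemma integrable_quadratic_mul_gaussianPDFReal (c₀ c₁ c₂ : ℝ) :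
    Integrable fun x => (c₀ + c₁ * x + c₂ * x ^ 2) * gaussianPDFReal 0 1 x := by
  have h := (((integrable_pow_mul_gaussianPDFReal 0).const_mul c₀).add
    ((integrable_pow_mul_gaussianPDFReal 1).const_mul c₁)).add
    ((integrable_pow_mul_gaussianPDFReal 2).const_mul c₂)
  exact h.congr (ae_of_all _ fun x => by simp only [Pi.add_apply]; ring)

lemma hasDerivAt_quadratic_mul_gaussianPDFReal_antideriv (c₀ c₁ c₂ x : ℝ) :
    HasDerivAt (fun y => -(c₁ + c₂ * y) * gaussianPDFReal 0 1 y + (c₀ + c₂) * (erf (y / √2) / 2))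
      ((c₀ + c₁ * x + c₂ * x ^ 2) * gaussianPDFReal 0 1 x) x := by
  have h := ((((hasDerivAt_id x).const_mul c₂).const_add c₁).neg.mul
    (hasDerivAt_gaussianPDFReal_zero_one x)).add
    ((hasDerivAt_erf_div_sqrt_two x).const_mul (c₀ + c₂))
  exact h.congr_deriv (by simp only [id, Pi.neg_apply]; ring)

lemma tendsto_quadratic_mul_gaussianPDFReal_antideriv_atTop (c₀ c₁ c₂ : ℝ) :
    Tendsto (fun y => -(c₁ + c₂ * y) * gaussianPDFReal 0 1 y + (c₀ + c₂) * (erf (y / √2) / 2))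
      atTop (𝓝 ((c₀ + c₂) / 2)) := by
  have hpdf := ((tendsto_pow_mul_gaussianPDFReal_atTop 0).const_mul (-c₁)).add
    ((tendsto_pow_mul_gaussianPDFReal_atTop 1).const_mul (-c₂))
  have herf := ((tendsto_erf_atTop.comp (tendsto_id.atTop_div_const (sqrt_pos.2 two_pos))).div_const
    2).const_mul (c₀ + c₂)
  convert hpdf.add herf using 1
  · ext y; simp only [Function.comp_apply, id]; ring
  · congr 1; ring

lemma integral_Ioi_quadratic_mul_gaussianPDFReal (c₀ c₁ c₂ a : ℝ) :
    ∫ x in Ioi a, (c₀ + c₁ * x + c₂ * x ^ 2) * gaussianPDFReal 0 1 x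
      = (c₁ + c₂ * a) * gaussianPDFReal 0 1 a + (c₀ + c₂) * (erfc (a / √2) / 2) := by
  rw [integral_Ioi_of_hasDerivAt_of_tendsto'
    (fun x _ => hasDerivAt_quadratic_mul_gaussianPDFReal_antideriv c₀ c₁ c₂ x)
    (integrable_quadratic_mul_gaussianPDFReal c₀ c₁ c₂).integrableOn
    (tendsto_quadratic_mul_gaussianPDFReal_antideriv_atTop c₀ c₁ c₂), erfc]
  ring

lemma integral_Ioi_sub_sq_div_mul_gaussianPDFReal (ν b c a : ℝ) :
    ∫ x in Ioi a, (ν - (x + b) ^ 2 / c) * gaussianPDFReal 0 1 x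
      = -(1 / c) * ((a + 2 * b) * gaussianPDFReal 0 1 a + (b ^ 2 + 1) / 2 * erfc (a / √2))
        + ν / 2 * erfc (a / √2) := by
  have h := integral_Ioi_quadratic_mul_gaussianPDFReal (ν - b ^ 2 / c) (-(2 * b / c)) (-(1 / c)) a
  rw [show (fun x => (ν - (x + b) ^ 2 / c) * gaussianPDFReal 0 1 x) = fun x =>
    (ν - b ^ 2 / c + -(2 * b / c) * x + -(1 / c) * x ^ 2) * gaussianPDFReal 0 1 x by ext; ring, h]
  ring

lemma integral_eq_setIntegral_Iic_add_setIntegral_Ioi_of_eqOn_zero {E : Type*}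
    [NormedAddCommGroup E] [NormedSpace ℝ E] {μ : Measure ℝ} {f : ℝ → E} {s t : ℝ}
    (hf : Integrable f μ) (hst : s ≤ t) (hf₀ : EqOn f 0 (Ioc s t)) :
    ∫ x, f x ∂μ = ∫ x in Iic s, f x ∂μ + ∫ x in Ioi t, f x ∂μ := by
  rw [← intervalIntegral.integral_Iic_add_Ioi hf.integrableOn hf.integrableOn,
    ← Ioc_union_Ioi_eq_Ioi hst, setIntegral_union (Ioc_disjoint_Ioi le_rfl) measurableSet_Ioi
      hf.integrableOn hf.integrableOn, setIntegral_eq_zero_of_forall_eq_zero hf₀, zero_add]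

lemma integral_min_sub_sq_div_gaussianReal {ν c A : ℝ} (hc : 0 < c) (hA : 0 ≤ A)
    (hAν : A ^ 2 = c * ν) (b : ℝ) :
    ∫ h, min (ν - (h + b) ^ 2 / c) 0 ∂gaussianReal 0 1
      = (∫ x in Ioi (A + b), (ν - (x + -b) ^ 2 / c) * gaussianPDFReal 0 1 x)
        + ∫ x in Ioi (A - b), (ν - (x + b) ^ 2 / c) * gaussianPDFReal 0 1 x := by
  have hq : ∀ y, ν - y ^ 2 / c = (A ^ 2 - y ^ 2) / c := fun y => by field_simp; linarith
  have hout : ∀ y, A < y → min (ν - y ^ 2 / c) 0 = ν - y ^ 2 / c := fun y hy =>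
    min_eq_left <| (hq y).symm ▸ div_nonpos_of_nonpos_of_nonneg
      (sub_nonpos.2 (pow_le_pow_left₀ hA hy.le 2)) hc.le
  have hin : ∀ y, |y| ≤ A → min (ν - y ^ 2 / c) 0 = 0 := fun y hy =>
    min_eq_right <| (hq y).symm ▸ div_nonneg
      (sub_nonneg.2 (sq_le_sq.2 (by rwa [abs_of_nonneg hA]))) hc.le
  have hint : Integrable fun x => min (ν - (x + b) ^ 2 / c) 0 * gaussianPDFReal 0 1 x := by
    have hquad := integrable_quadratic_mul_gaussianPDFReal (ν - b ^ 2 / c) (-(2 * b / c)) (-(1 / c))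
    refine (hquad.inf (integrable_zero ℝ ℝ volume)).congr (ae_of_all _ fun x => ?_)
    simp only [Pi.inf_apply, Pi.zero_apply,
      min_mul_of_nonneg _ _ (gaussianPDFReal_nonneg 0 1 x), zero_mul]
    congr 1
    ring
  have hleft : ∫ x in Iic (-A - b), min (ν - (x + b) ^ 2 / c) 0 * gaussianPDFReal 0 1 x
      = ∫ x in Ioi (A + b), (ν - (x + -b) ^ 2 / c) * gaussianPDFReal 0 1 x := by
    rw [show -A - b = -(A + b) by ring, ← integral_comp_neg_Ioi]
    refine setIntegral_congr_fun measurableSet_Ioi fun x hx => ?_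
    rw [gaussianPDFReal_zero_one_neg, show -x + b = -(x + -b) by ring, neg_sq,
      hout _ (by linarith [hx.out])]
  have hright : ∫ x in Ioi (A - b), min (ν - (x + b) ^ 2 / c) 0 * gaussianPDFReal 0 1 x
      = ∫ x in Ioi (A - b), (ν - (x + b) ^ 2 / c) * gaussianPDFReal 0 1 x :=
    setIntegral_congr_fun measurableSet_Ioi fun x hx => by
      rw [hout _ (by linarith [hx.out])]
  have hmid : EqOn (fun x => min (ν - (x + b) ^ 2 / c) 0 * gaussianPDFReal 0 1 x) 0
      (Ioc (-A - b) (A - b)) := fun x hx => by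
    dsimp only
    rw [Pi.zero_apply, hin _ (abs_le.2 ⟨by linarith [hx.1], by linarith [hx.2]⟩), zero_mul]
  rw [integral_gaussianReal_eq_integral_smul one_ne_zero]
  simp_rw [smul_eq_mul, mul_comm (gaussianPDFReal 0 1 _)]
  rw [integral_eq_setIntegral_Iic_add_setIntegral_Ioi_of_eqOn_zero hint (by linarith) hmid,
    hleft, hright]

lemma sInf_mul_add_div_eq_sqrt_mul {α r : ℝ} (hα : 0 < α) (hr : 0 ≤ r) :
    sInf {z : ℝ | ∃ g : ℝ, 0 < g ∧ z = g * r + α * r / (4 * g)} = √α * r := by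
  have hmem : √α * r ∈ {z : ℝ | ∃ g : ℝ, 0 < g ∧ z = g * r + α * r / (4 * g)} := by
    refine ⟨√α / 2, by positivity, ?_⟩
    have := sq_sqrt hα.le
    field_simp
    linear_combination 4 * r * this
  have hlb : ∀ z ∈ {z : ℝ | ∃ g : ℝ, 0 < g ∧ z = g * r + α * r / (4 * g)}, √α * r ≤ z := by
    rintro z ⟨g, hg, rfl⟩
    rw [← sub_nonneg]
    have hsq := sq_sqrt hα.le
    have key : g * r + α * r / (4 * g) - √α * r = r * (2 * g - √α) ^ 2 / (4 * g) := by
      field_simp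
      linear_combination -r * hsq
    rw [key]
    positivity
  exact le_antisymm (csInf_le ⟨_, hlb⟩ hmem) (le_csInf ⟨_, hmem⟩ hlb)

theorem stmt8_general (α r₂ β γ ν ν₁ c₁ r₁ : ℝ) (hα : 0 < α) (hr₂ : 0 < r₂)
    (hγ : 0 < γ) (hν : 0 ≤ ν)
    (bbar abar a₁ a₂ f21 f221 f222 : ℝ)
    (ha : abar = 2 * Real.sqrt (γ * ν))
    (ha₁ : a₁ = 2 * Real.sqrt (γ * ν) - bbar)
    (ha₂ : a₂ = -(2 * Real.sqrt (γ * ν)) - bbar)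
    (hf21 : f21 = 2 * (-(1 / (4 * γ)) *
        (abar * Real.exp (-abar ^ 2 / 2) / Real.sqrt (2 * π)
          + (1 / 2) * erfc (abar / Real.sqrt 2))
      + (ν / 2) * erfc (abar / Real.sqrt 2)))
    (hf221 : f221 = -(1 / (4 * γ)) *
        ((a₁ + 2 * bbar) * Real.exp (-a₁ ^ 2 / 2) / Real.sqrt (2 * π)
          + ((bbar ^ 2 + 1) / 2) * erfc (a₁ / Real.sqrt 2))
      + (ν / 2) * erfc (a₁ / Real.sqrt 2))
    (hf222 : f222 = -(1 / (4 * γ)) *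
        (-((a₂ + 2 * bbar) * Real.exp (-a₂ ^ 2 / 2) / Real.sqrt (2 * π))
          + ((bbar ^ 2 + 1) / 2) * erfc (-a₂ / Real.sqrt 2))
      + (ν / 2) * erfc (-a₂ / Real.sqrt 2)) :
    sInf { z : ℝ | ∃ g : ℝ, 0 < g ∧ z = g * r₂ + α * r₂ / (4 * g) }
      - ν₁ * c₁ - γ * r₁ ^ 2 - ν * β
      + (1 - β) * ∫ h : ℝ, min (ν - h ^ 2 / (4 * γ)) 0 ∂(gaussianReal 0 1)
      + β * ∫ h : ℝ, min (ν - (h + bbar) ^ 2 / (4 * γ)) 0 ∂(gaussianReal 0 1)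
    = -(ν₁ * c₁) - γ * r₁ ^ 2 - ν * β + (1 - β) * f21 + β * (f221 + f222)
      + Real.sqrt α * r₂ := by
  have hA : (2 * √(γ * ν)) ^ 2 = 4 * γ * ν := by
    rw [mul_pow, sq_sqrt (by positivity)]; ring
  have htrunc := integral_min_sub_sq_div_gaussianReal (by positivity) (by positivity) hA
  have hcentered : ∫ h, min (ν - h ^ 2 / (4 * γ)) 0 ∂gaussianReal 0 1 = f21 := by
    have h := htrunc 0
    rw [integral_Ioi_sub_sq_div_mul_gaussianPDFReal,
      integral_Ioi_sub_sq_div_mul_gaussianPDFReal] at h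
    simp only [add_zero, neg_zero, sub_zero] at h
    rw [h, hf21, ha]
    simp only [gaussianPDFReal_zero_one]
    ring
  have hshifted : ∫ h, min (ν - (h + bbar) ^ 2 / (4 * γ)) 0 ∂gaussianReal 0 1 = f221 + f222 := by
    rw [htrunc, show 2 * √(γ * ν) + bbar = -a₂ by rw [ha₂]; ring, ← ha₁,
      integral_Ioi_sub_sq_div_mul_gaussianPDFReal, integral_Ioi_sub_sq_div_mul_gaussianPDFReal,
      gaussianPDFReal_zero_one_neg, hf221, hf222]
    simp only [gaussianPDFReal_zero_one]
    ring
  rw [sInf_mul_add_div_eq_sqrt_mul hα hr₂.le, hcentered, hshifted]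
  ring

/-- Closed-form evaluation of the first level (`r = 1`) of the lifted random dual
`ψ̄_rd^{(1)}` of the ℓ₀ ML decoding for the binary signal. -/
theorem stmt8 (α r₂ β γ ν ν₁ c₁ r₁ : ℝ) (hα : 0 < α) (hr₂ : 0 < r₂)
    (hβ : β ∈ Set.Ioo (0:ℝ) 1) (hγ : 0 < γ) (hν : 0 ≤ ν)
    (dbar bbar abar a₁ a₂ f21 f221 f222 : ℝ)
    (hd : dbar = 1 / Real.sqrt β) (hb : bbar = ν₁ * dbar)
    (ha : abar = 2 * Real.sqrt (γ * ν))
    (ha₁ : a₁ = 2 * Real.sqrt (γ * ν) - bbar)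
    (ha₂ : a₂ = -(2 * Real.sqrt (γ * ν)) - bbar)
    (hf21 : f21 = 2 * (-(1 / (4 * γ)) *
        (abar * Real.exp (-abar ^ 2 / 2) / Real.sqrt (2 * π)
          + (1 / 2) * erfc (abar / Real.sqrt 2))
      + (ν / 2) * erfc (abar / Real.sqrt 2)))
    (hf221 : f221 = -(1 / (4 * γ)) *
        ((a₁ + 2 * bbar) * Real.exp (-a₁ ^ 2 / 2) / Real.sqrt (2 * π)
          + ((bbar ^ 2 + 1) / 2) * erfc (a₁ / Real.sqrt 2))
      + (ν / 2) * erfc (a₁ / Real.sqrt 2))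
    (hf222 : f222 = -(1 / (4 * γ)) *
        (-((a₂ + 2 * bbar) * Real.exp (-a₂ ^ 2 / 2) / Real.sqrt (2 * π))
          + ((bbar ^ 2 + 1) / 2) * erfc (-a₂ / Real.sqrt 2))
      + (ν / 2) * erfc (-a₂ / Real.sqrt 2)) :
    sInf { z : ℝ | ∃ g : ℝ, 0 < g ∧ z = g * r₂ + α * r₂ / (4 * g) }
      - ν₁ * c₁ - γ * r₁ ^ 2 - ν * β
      + (1 - β) * ∫ h : ℝ, min (ν - h ^ 2 / (4 * γ)) 0 ∂(gaussianReal 0 1)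
      + β * ∫ h : ℝ, min (ν - (h + bbar) ^ 2 / (4 * γ)) 0 ∂(gaussianReal 0 1)
    = -(ν₁ * c₁) - γ * r₁ ^ 2 - ν * β + (1 - β) * f21 + β * (f221 + f222)
      + Real.sqrt α * r₂ :=
  stmt8_general α r₂ β γ ν ν₁ c₁ r₁ hα hr₂ hγ hν bbar abar a₁ a₂ f21 f221 f222 ha ha₁ ha₂ hf21 hf221
    hf222
end

section
/- Let γ > 0, ν ≥ 0, c₂ > 0, q₂ ∈ [0,1) and h₃ ∈ ℝ, and assume 2γ > c₂·(1 − q₂). Set A = √(c₂(1−q₂)), B = h₃·√(c₂q₂), C = 4γ, D = ( −h₃·√q₂ − 2√(γν) )/√(1−q₂), E = ( −h₃·√q₂ + 2√(γν) )/√(1−q₂). Then ∫_ℝ exp( −c₂·min( ν − ( √(1−q₂)·h + √q₂·h₃ )²/(4γ), 0 ) ) dγ₁(h) = I₁ + I₂, where I₁ = ( √C / (2·√(C − 2A²)) ) · exp( −c₂·ν + B²/(C − 2A²) ) · (2 − Q) with Q = erf( (C·E − 2A²·E − 2A·B)/(√2·√C·√(C − 2A²)) ) − erf( (C·D − 2A²·D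 − 2A·B)/(√2·√C·√(C − 2A²)) ), and I₂ = (1/2)·erfc(D/√2) − (1/2)·erfc(E/√2). -/
/-!
Where `(√(1 - q₂) h + √q₂ h₃)² ≤ 4γν`, i.e. on `[D, E]`, the minimum vanishes and the integrand
is `1`; elsewhere it equals `e^{-c₂ν} e^{(A h + B)² / C}`. So the integral is
`γ₁[D, E] + e^{-c₂ν} (∫_ℝ - ∫_D^E) e^{(A h + B)² / C} dγ₁(h)`. Since `C > 2A²`, completing the
square turns `e^{(A h + B)² / C - h² / 2}` into a multiple of `e^{-(β h + m)²}`, so every piece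
is an affine change of variables away from `∫ e^{-t²}`, i.e. a difference of `erf` values.
-/

open MeasureTheory ProbabilityTheory Real

open Set

lemma integral_exp_neg_sq_eq_erf_sub (a b : ℝ) :
    ∫ t in a..b, exp (-t ^ 2) = √π / 2 * (erf b - erf a) := by
  have hc : Continuous fun t : ℝ => exp (-t ^ 2) := by fun_prop
  rw [← intervalIntegral.integral_interval_sub_left (hc.intervalIntegrable 0 b)
    (hc.intervalIntegrable 0 a), erf, erf]
  field_simp

section AffineGaussian

variable {β : ℝ} (m : ℝ)

lemma intervalIntegral_exp_neg_sq_affine (hβ : β ≠ 0) (a b : ℝ) :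
    ∫ x in a..b, exp (-(β * x + m) ^ 2)
      = √π / (2 * β) * (erf (β * b + m) - erf (β * a + m)) := by
  rw [intervalIntegral.integral_comp_mul_add (fun t => exp (-t ^ 2)) hβ,
    integral_exp_neg_sq_eq_erf_sub, smul_eq_mul]
  field_simp

lemma integral_exp_neg_sq_affine (hβ : β ≠ 0) : ∫ x, exp (-(β * x + m) ^ 2) = √π / |β| := by
  have hshift : ∫ x, exp (-(β * x + m) ^ 2) = ∫ x, exp (-(β * x) ^ 2) := by
    simpa [mul_add, mul_div_cancel₀ _ hβ] using
      integral_add_right_eq_self (fun x => exp (-(β * x) ^ 2)) (m / β)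
  rw [hshift, Measure.integral_comp_mul_left (fun y => exp (-y ^ 2)) β]
  have hgauss := integral_gaussian 1
  simp only [neg_mul, one_mul, div_one] at hgauss
  rw [hgauss, abs_inv, smul_eq_mul]
  field_simp

lemma integrable_exp_neg_sq_affine (hβ : β ≠ 0) : Integrable fun x => exp (-(β * x + m) ^ 2) := by
  have h := (integrable_exp_neg_mul_sq (b := β ^ 2) (by positivity)).comp_add_right (m / β)
  refine h.congr (ae_of_all _ fun x => ?_)
  dsimp only
  field_simp

end AffineGaussian

section TiltedGaussian

variable {A B C : ℝ}

lemma sq_div_sub_sq_div_two_eq (hAC : 2 * A ^ 2 < C) (x : ℝ) :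
    (A * x + B) ^ 2 / C - x ^ 2 / 2 = B ^ 2 / (C - 2 * A ^ 2)
      - ((C * x - 2 * A ^ 2 * x - 2 * A * B) / (√2 * √C * √(C - 2 * A ^ 2))) ^ 2 := by
  have hW : 0 < C - 2 * A ^ 2 := sub_pos.mpr hAC
  have hC : 0 < C := by nlinarith
  rw [div_pow, mul_pow, mul_pow, sq_sqrt zero_le_two, sq_sqrt hC.le, sq_sqrt hW.le,
    div_sub_div _ _ hC.ne' two_ne_zero, div_sub_div _ _ hW.ne' (by positivity),
    div_eq_div_iff (by positivity) (by positivity)]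
  ring

lemma gaussianPDFReal_mul_exp_sq_div_eq (hAC : 2 * A ^ 2 < C) (x : ℝ) :
    gaussianPDFReal 0 1 x * exp ((A * x + B) ^ 2 / C)
      = (√(2 * π))⁻¹ * exp (B ^ 2 / (C - 2 * A ^ 2)) *
        exp (-((C - 2 * A ^ 2) / (√2 * √C * √(C - 2 * A ^ 2)) * x
          + -(2 * A * B) / (√2 * √C * √(C - 2 * A ^ 2))) ^ 2) := by
  simp only [gaussianPDFReal, NNReal.coe_one, mul_one, sub_zero]
  rw [mul_assoc, ← exp_add, mul_assoc, ← exp_add]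
  congr 2
  linear_combination sq_div_sub_sq_div_two_eq (B := B) hAC x

lemma inv_sqrt_two_pi_mul_sqrt_pi_div (hAC : 2 * A ^ 2 < C) :
    (√(2 * π))⁻¹ * (√π / ((C - 2 * A ^ 2) / (√2 * √C * √(C - 2 * A ^ 2))))
      = √C / √(C - 2 * A ^ 2) := by
  have hW : 0 < C - 2 * A ^ 2 := sub_pos.mpr hAC
  have hC : 0 < C := by nlinarith
  rw [sqrt_mul zero_le_two, ← sq_sqrt hW.le]
  field_simp
  rw [sqrt_sq (sqrt_nonneg _)]

lemma intervalIntegral_gaussianPDFReal_mul_exp_sq_div (hAC : 2 * A ^ 2 < C) (a b : ℝ) :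
    ∫ x in a..b, gaussianPDFReal 0 1 x * exp ((A * x + B) ^ 2 / C)
      = √C / (2 * √(C - 2 * A ^ 2)) * exp (B ^ 2 / (C - 2 * A ^ 2)) *
        (erf ((C * b - 2 * A ^ 2 * b - 2 * A * B) / (√2 * √C * √(C - 2 * A ^ 2)))
          - erf ((C * a - 2 * A ^ 2 * a - 2 * A * B) / (√2 * √C * √(C - 2 * A ^ 2)))) := by
  have hW : 0 < C - 2 * A ^ 2 := sub_pos.mpr hAC
  have hC : 0 < C := by nlinarith
  have hβ : (C - 2 * A ^ 2) / (√2 * √C * √(C - 2 * A ^ 2)) ≠ 0 := by positivity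
  simp_rw [gaussianPDFReal_mul_exp_sq_div_eq hAC]
  have harg : ∀ y, (C - 2 * A ^ 2) / (√2 * √C * √(C - 2 * A ^ 2)) * y
      + -(2 * A * B) / (√2 * √C * √(C - 2 * A ^ 2))
      = (C * y - 2 * A ^ 2 * y - 2 * A * B) / (√2 * √C * √(C - 2 * A ^ 2)) := fun y => by ring
  have hconst := inv_sqrt_two_pi_mul_sqrt_pi_div hAC
  rw [intervalIntegral.integral_const_mul, intervalIntegral_exp_neg_sq_affine _ hβ, harg, harg]
  generalize (C - 2 * A ^ 2) / (√2 * √C * √(C - 2 * A ^ 2)) = β at hconst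
  linear_combination (exp (B ^ 2 / (C - 2 * A ^ 2)) / 2 *
    (erf ((C * b - 2 * A ^ 2 * b - 2 * A * B) / (√2 * √C * √(C - 2 * A ^ 2)))
      - erf ((C * a - 2 * A ^ 2 * a - 2 * A * B) / (√2 * √C * √(C - 2 * A ^ 2))))) * hconst

lemma integral_gaussianPDFReal_mul_exp_sq_div (hAC : 2 * A ^ 2 < C) :
    ∫ x, gaussianPDFReal 0 1 x * exp ((A * x + B) ^ 2 / C)
      = √C / √(C - 2 * A ^ 2) * exp (B ^ 2 / (C - 2 * A ^ 2)) := by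
  have hW : 0 < C - 2 * A ^ 2 := sub_pos.mpr hAC
  have hC : 0 < C := by nlinarith
  have hβ : 0 < (C - 2 * A ^ 2) / (√2 * √C * √(C - 2 * A ^ 2)) := by positivity
  simp_rw [gaussianPDFReal_mul_exp_sq_div_eq hAC]
  rw [integral_const_mul, integral_exp_neg_sq_affine _ hβ.ne', abs_of_pos hβ,
    ← inv_sqrt_two_pi_mul_sqrt_pi_div hAC]
  ring

lemma integrable_gaussianPDFReal_mul_exp_sq_div (hAC : 2 * A ^ 2 < C) :
    Integrable fun x => gaussianPDFReal 0 1 x * exp ((A * x + B) ^ 2 / C) := by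
  have hW : 0 < C - 2 * A ^ 2 := sub_pos.mpr hAC
  have hC : 0 < C := by nlinarith
  simp_rw [gaussianPDFReal_mul_exp_sq_div_eq hAC]
  exact (integrable_exp_neg_sq_affine _ (by positivity)).const_mul _

end TiltedGaussian

lemma intervalIntegral_gaussianPDFReal_zero_one (a b : ℝ) :
    ∫ x in a..b, gaussianPDFReal 0 1 x = (erf (b / √2) - erf (a / √2)) / 2 := by
  have h := intervalIntegral_gaussianPDFReal_mul_exp_sq_div (A := 0) (B := 0) (C := 1)
    (by norm_num) a b
  simp only [zero_mul, add_zero, ne_eq, OfNat.ofNat_ne_zero, not_false_eq_true, zero_pow,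
    zero_div, exp_zero, mul_one, mul_zero, sub_zero, sqrt_one, one_mul] at h
  rw [h]
  ring

lemma integral_gaussianReal_piecewise_Icc_one_exp_sq_div {a b A B C : ℝ} (hab : a ≤ b)
    (hAC : 2 * A ^ 2 < C) (K : ℝ) :
    ∫ x, (Icc a b).piecewise 1 (fun x => K * exp ((A * x + B) ^ 2 / C)) x ∂gaussianReal 0 1
      = K * (√C / (2 * √(C - 2 * A ^ 2)) * exp (B ^ 2 / (C - 2 * A ^ 2)) *
          (2 - (erf ((C * b - 2 * A ^ 2 * b - 2 * A * B) / (√2 * √C * √(C - 2 * A ^ 2)))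
            - erf ((C * a - 2 * A ^ 2 * a - 2 * A * B) / (√2 * √C * √(C - 2 * A ^ 2))))))
        + (erf (b / √2) - erf (a / √2)) / 2 := by
  have hg := (integrable_gaussianPDFReal_mul_exp_sq_div (B := B) hAC).const_mul K
  have hpiece : (fun x => gaussianPDFReal 0 1 x •
        (Icc a b).piecewise 1 (fun x => K * exp ((A * x + B) ^ 2 / C)) x)
      = (Icc a b).piecewise (gaussianPDFReal 0 1)
          (fun x => K * (gaussianPDFReal 0 1 x * exp ((A * x + B) ^ 2 / C))) := by
    ext x
    by_cases hx : x ∈ Icc a b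
    · simp [hx]
    · simp only [piecewise_eq_of_notMem _ _ _ hx, smul_eq_mul]
      ring
  rw [integral_gaussianReal_eq_integral_smul one_ne_zero, hpiece,
    integral_piecewise measurableSet_Icc (integrable_gaussianPDFReal 0 1).integrableOn
      hg.integrableOn, setIntegral_compl measurableSet_Icc hg,
    integral_Icc_eq_integral_Ioc, integral_Icc_eq_integral_Ioc,
    ← intervalIntegral.integral_of_le hab, ← intervalIntegral.integral_of_le hab,
    integral_const_mul, intervalIntegral.integral_const_mul,
    intervalIntegral_gaussianPDFReal_zero_one, integral_gaussianPDFReal_mul_exp_sq_div hAC,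
    intervalIntegral_gaussianPDFReal_mul_exp_sq_div hAC]
  ring

lemma exp_neg_mul_min_sub_zero (c ν t : ℝ) :
    exp (-c * min (ν - t) 0) = if t ≤ ν then 1 else exp (-(c * ν)) * exp (c * t) := by
  split_ifs with ht
  · rw [min_eq_right (sub_nonneg.mpr ht), mul_zero, exp_zero]
  · rw [min_eq_left (sub_nonpos.mpr (not_le.mp ht).le), ← exp_add]
    ring_nf

lemma sq_le_sq_iff_mem_Icc {s c T x : ℝ} (hs : 0 < s) (hT : 0 ≤ T) :
    (s * x + c) ^ 2 ≤ T ^ 2 ↔ x ∈ Icc ((-c - T) / s) ((-c + T) / s) := by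
  rw [sq_le_sq, abs_of_nonneg hT, abs_le, mem_Icc, div_le_iff₀ hs, le_div_iff₀ hs]
  constructor <;> rintro ⟨h₁, h₂⟩ <;> constructor <;> linarith

/-- Evaluation of `E_{U₂} Z₀^{(2)}`, the inner Gaussian average of the
zero-coordinate partition term at the second level of lifting. -/
theorem stmt14 (γ ν c₂ q₂ h₃ : ℝ) (hγ : 0 < γ) (hν : 0 ≤ ν) (hc : 0 < c₂)
    (hq₂ : q₂ ∈ Set.Ico (0:ℝ) 1) (hkey : c₂ * (1 - q₂) < 2 * γ)
    (A B C D E : ℝ)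
    (hA : A = Real.sqrt (c₂ * (1 - q₂)))
    (hB : B = h₃ * Real.sqrt (c₂ * q₂))
    (hC : C = 4 * γ)
    (hD : D = (-(h₃ * Real.sqrt q₂) - 2 * Real.sqrt (γ * ν)) / Real.sqrt (1 - q₂))
    (hE : E = (-(h₃ * Real.sqrt q₂) + 2 * Real.sqrt (γ * ν)) / Real.sqrt (1 - q₂))
    (Q I₁ I₂ : ℝ)
    (hQ : Q = erf ((C * E - 2 * A ^ 2 * E - 2 * A * B) /
          (Real.sqrt 2 * Real.sqrt C * Real.sqrt (C - 2 * A ^ 2)))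
      - erf ((C * D - 2 * A ^ 2 * D - 2 * A * B) /
          (Real.sqrt 2 * Real.sqrt C * Real.sqrt (C - 2 * A ^ 2))))
    (hI₁ : I₁ = (Real.sqrt C / (2 * Real.sqrt (C - 2 * A ^ 2))) *
        Real.exp (-(c₂ * ν) + B ^ 2 / (C - 2 * A ^ 2)) * (2 - Q))
    (hI₂ : I₂ = (1 / 2) * erfc (D / Real.sqrt 2) - (1 / 2) * erfc (E / Real.sqrt 2)) :
    ∫ h : ℝ, Real.exp (-c₂ *
        min (ν - (Real.sqrt (1 - q₂) * h + Real.sqrt q₂ * h₃) ^ 2 / (4 * γ)) 0)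
      ∂(gaussianReal 0 1) = I₁ + I₂ := by
  obtain ⟨hq₀, hq₁⟩ := hq₂
  have hAC : 2 * A ^ 2 < C := by
    rw [hA, hC, sq_sqrt (mul_nonneg hc.le (by linarith))]
    linarith
  have hDE : D ≤ E := by
    rw [hD, hE]
    gcongr
    linarith [sqrt_nonneg (γ * ν)]
  have hmem : ∀ h, (√(1 - q₂) * h + √q₂ * h₃) ^ 2 / (4 * γ) ≤ ν ↔ h ∈ Icc D E := by
    intro h
    rw [div_le_iff₀ (by positivity),
      show ν * (4 * γ) = (2 * √(γ * ν)) ^ 2 by rw [mul_pow, sq_sqrt (by positivity)]; ring,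
      sq_le_sq_iff_mem_Icc (sqrt_pos.mpr (by linarith)) (by positivity), hD, hE, mul_comm h₃]
  have hexponent :
      ∀ h, c₂ * ((√(1 - q₂) * h + √q₂ * h₃) ^ 2 / (4 * γ)) = (A * h + B) ^ 2 / C := by
    intro h
    rw [hA, hB, hC, sqrt_mul hc.le, sqrt_mul hc.le]
    linear_combination (√(1 - q₂) * h + √q₂ * h₃) ^ 2 / (4 * γ) * (sq_sqrt hc.le).symm
  have hintegrand : (fun h => exp (-c₂ *
        min (ν - (√(1 - q₂) * h + √q₂ * h₃) ^ 2 / (4 * γ)) 0))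
      = (Icc D E).piecewise 1 (fun h => exp (-(c₂ * ν)) * exp ((A * h + B) ^ 2 / C)) := by
    ext h
    simp only [exp_neg_mul_min_sub_zero, hmem, hexponent, piecewise, Pi.one_apply]
  rw [hintegrand, integral_gaussianReal_piecewise_Icc_one_exp_sq_div hDE hAC, hI₁, hI₂, hQ,
    erfc, erfc, exp_add]
  ring
end
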